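/- arXiv:0811.3076 — 4 statements merged into one kernel-verified Lean document; each statement's English description precedes it below -/
import Mathlib

section
/- Let g₀ be a complex Lie algebra with structure constants f_{αβ}^γ relative to a basis {T_α}, let n ≥ 1, q = exp(2πi/n), and let C_n^2 be the generalized Clifford algebra with basis e_{a,b} = e₁^a e₂^b satisfying e_{a,b}e_{c,d} = q^{-bc} e_{a+c,b+d}. Define on g = C_n^2 ⊗ g₀ the grading by Γ = ℤ/n × ℤ/n with g_{(a,b)} = e_{a,b} ⊗ g₀ and the bracket ⟦e_{a,b}⊗X, e_{c,d}⊗Y⟧ = q^{-bc} e_{a+c,b+d} ⊗ [X,Y]. Then g is a color Lie algebra with commutation factor N((a,b),(c,d)) = q^{ad-bc}: the bracket satisfies ⟦u,v⟧ = -N(deg u, deg v)⟦v,u⟧ and the color Jacobi identity ⟦u,⟦v,w⟧⟧ = ⟦⟦u,v⟧,w⟧ + N(deg u, deg v)⟦v,⟦u,w⟧⟧ on homogeneous elements. -/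
/-- For a complex Lie algebra `g₀` and the generalized Clifford
algebra `C_n^2`, the bracket `⟦e_{a,b}⊗X, e_{c,d}⊗Y⟧ = q^{-bc} e_{a+c,b+d} ⊗ [X,Y]`
(here represented on homogeneous components, identifying `e_{u} ⊗ g₀ ≅ g₀`)
turns `C_n^2 ⊗ g₀` into a color Lie algebra with commutation factor
`N((a,b),(c,d)) = q^{ad-bc}`: color antisymmetry and the color Jacobi identity hold. -/
theorem clifford_tensor_color_lie (n : ℕ) [NeZero n]
    (q : ℂ) (hq : q = Complex.exp (2 * Real.pi * Complex.I / n))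
    {L : Type*} [LieRing L] [LieAlgebra ℂ L]
    (B : ZMod n × ZMod n → L → ZMod n × ZMod n → L → L)
    (hB : ∀ u X v Y, B u X v Y = q ^ (-((u.2.val : ℤ) * (v.1.val : ℤ))) • ⁅X, Y⁆)
    (N : ZMod n × ZMod n → ZMod n × ZMod n → ℂ)
    (hN : ∀ u v, N u v =
      q ^ ((u.1.val * v.2.val : ℤ) - (u.2.val * v.1.val : ℤ))) :
    (∀ u v (X Y : L), B u X v Y = -(N u v • B v Y u X)) ∧
    (∀ u v w (X Y Z : L),
      B u X (v + w) (B v Y w Z) =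
        B (u + v) (B u X v Y) w Z + N u v • B v Y (u + w) (B u X w Z)) := by
  have hq0 : q ≠ 0 := by rw [hq]; exact Complex.exp_ne_zero _
  have hn0 : (n : ℂ) ≠ 0 := Nat.cast_ne_zero.mpr (NeZero.ne n)
  have hqn : q ^ (n : ℤ) = 1 := by
    rw [hq, zpow_natCast, ← Complex.exp_nat_mul]
    rw [show (n : ℂ) * (2 * Real.pi * Complex.I / n) = 2 * Real.pi * Complex.I by
      field_simp]
    exact Complex.exp_two_pi_mul_I
  have hnk : ∀ k : ℤ, q ^ ((n : ℤ) * k) = 1 := by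
    intro k; rw [zpow_mul, hqn, one_zpow]
  have hval : ∀ a b : ZMod n, ∃ k : ℤ,
      (((a + b).val : ℤ)) = (a.val : ℤ) + (b.val : ℤ) + (n : ℤ) * k := by
    intro a b
    refine ⟨-(((a.val : ℤ) + (b.val : ℤ)) / (n : ℤ)), ?_⟩
    rw [ZMod.val_add]
    push_cast
    rw [Int.emod_def]
    ring
  constructor
  · intro u v X Y
    rw [hB u X v Y, hB v Y u X, hN, ← lie_skew Y X]
    simp only [smul_neg, neg_neg, smul_smul, ← zpow_add₀ hq0]
    congr 1
    ring
  · intro u v w X Y Z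
    simp only [hB, hN, lie_smul, smul_lie, smul_smul, ← zpow_add₀ hq0,
      Prod.fst_add, Prod.snd_add]
    obtain ⟨k1, hk1⟩ := hval v.1 w.1
    obtain ⟨k2, hk2⟩ := hval u.2 v.2
    obtain ⟨k3, hk3⟩ := hval u.1 w.1
    rw [hk1, hk2, hk3]
    have g1 : q ^ (-((u.2.val : ℤ) * ((v.1.val : ℤ) + (w.1.val : ℤ) + (n : ℤ) * k1)) +
          -((v.2.val : ℤ) * (w.1.val : ℤ))) =
        q ^ (-((u.2.val : ℤ) * (v.1.val : ℤ)) - (u.2.val : ℤ) * (w.1.val : ℤ) -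
          (v.2.val : ℤ) * (w.1.val : ℤ)) := by
      rw [show -((u.2.val : ℤ) * ((v.1.val : ℤ) + (w.1.val : ℤ) + (n : ℤ) * k1)) +
          -((v.2.val : ℤ) * (w.1.val : ℤ)) =
          (-((u.2.val : ℤ) * (v.1.val : ℤ)) - (u.2.val : ℤ) * (w.1.val : ℤ) -
            (v.2.val : ℤ) * (w.1.val : ℤ)) + (n : ℤ) * (-((u.2.val : ℤ) * k1)) by ring,
        zpow_add₀ hq0, hnk, mul_one]
    have g2 : q ^ (-(((u.2.val : ℤ) + (v.2.val : ℤ) + (n : ℤ) * k2) * (w.1.val : ℤ)) +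
          -((u.2.val : ℤ) * (v.1.val : ℤ))) =
        q ^ (-((u.2.val : ℤ) * (v.1.val : ℤ)) - (u.2.val : ℤ) * (w.1.val : ℤ) -
          (v.2.val : ℤ) * (w.1.val : ℤ)) := by
      rw [show -(((u.2.val : ℤ) + (v.2.val : ℤ) + (n : ℤ) * k2) * (w.1.val : ℤ)) +
          -((u.2.val : ℤ) * (v.1.val : ℤ)) =
          (-((u.2.val : ℤ) * (v.1.val : ℤ)) - (u.2.val : ℤ) * (w.1.val : ℤ) -
            (v.2.val : ℤ) * (w.1.val : ℤ)) + (n : ℤ) * (-(k2 * (w.1.val : ℤ))) by ring,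
        zpow_add₀ hq0, hnk, mul_one]
    have g3 : q ^ ((u.1.val : ℤ) * (v.2.val : ℤ) - (u.2.val : ℤ) * (v.1.val : ℤ) +
          (-((v.2.val : ℤ) * ((u.1.val : ℤ) + (w.1.val : ℤ) + (n : ℤ) * k3)) +
            -((u.2.val : ℤ) * (w.1.val : ℤ)))) =
        q ^ (-((u.2.val : ℤ) * (v.1.val : ℤ)) - (u.2.val : ℤ) * (w.1.val : ℤ) -
          (v.2.val : ℤ) * (w.1.val : ℤ)) := by
      rw [show (u.1.val : ℤ) * (v.2.val : ℤ) - (u.2.val : ℤ) * (v.1.val : ℤ) +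
          (-((v.2.val : ℤ) * ((u.1.val : ℤ) + (w.1.val : ℤ) + (n : ℤ) * k3)) +
            -((u.2.val : ℤ) * (w.1.val : ℤ))) =
          (-((u.2.val : ℤ) * (v.1.val : ℤ)) - (u.2.val : ℤ) * (w.1.val : ℤ) -
            (v.2.val : ℤ) * (w.1.val : ℤ)) + (n : ℤ) * (-((v.2.val : ℤ) * k3)) by ring,
        zpow_add₀ hq0, hnk, mul_one]
    rw [g1, g2, g3, ← smul_add, leibniz_lie]
end

section
/- Let g₀ be a complex Lie algebra with basis {J_a} and structure constants [J_a,J_b] = f_{ab}^c J_c, let g₁ be a copy of the adjoint representation with basis {A_a}, and let g_{ab} = Tr(ad A_a ∘ ad A_b) be the Killing form. Then g = g₀ ⊕ g₁ with brackets [J_a,J_b] = f_{ab}^c J_c, [J_a,A_b] = f_{ab}^c A_c, and {A_a,A_b,A_c} = g_{ab}J_c + g_{ac}J_b + g_{bc}J_a is a Lie algebra of order 3; in particular the identity Σ_{i=1}^{4} [A_{a_i}, {A_{a_1},…,Â_{a_i},…,A_{a_4}}] = 0 holds. -/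
/-- Let `g₀` be a complex Lie algebra and `g₁` a copy of its
adjoint representation; with `κ` the Killing form, the trilinear bracket
`{X,Y,Z} = κ(X,Y)•Z + κ(X,Z)•Y + κ(Y,Z)•X` makes `g₀ ⊕ g₁` a Lie algebra of
order 3: it is `g₀`-equivariant and the four-term Jacobi identity
`Σᵢ [Yᵢ, {Y₁,…,Ŷᵢ,…,Y₄}] = 0` holds. -/
theorem adjoint_lie_order_three {L : Type*} [LieRing L] [LieAlgebra ℂ L]
    [Module.Finite ℂ L] [Module.Free ℂ L]
    (T : L → L → L → L)
    (hT : ∀ X Y Z : L, T X Y Z =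
      killingForm ℂ L X Y • Z + killingForm ℂ L X Z • Y + killingForm ℂ L Y Z • X) :
    (∀ J X Y Z : L,
      ⁅J, T X Y Z⁆ = T ⁅J, X⁆ Y Z + T X ⁅J, Y⁆ Z + T X Y ⁅J, Z⁆) ∧
    (∀ W X Y Z : L,
      ⁅W, T X Y Z⁆ + ⁅X, T Y Z W⁆ + ⁅Y, T Z W X⁆ + ⁅Z, T W X Y⁆ = 0) := by
  have hk : ∀ x y z : L, killingForm ℂ L ⁅x, y⁆ z = - killingForm ℂ L y ⁅x, z⁆ :=
    fun x y z => LieModule.traceForm_apply_lie_apply' ℂ L L x y z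
  have hsymm : ∀ x y : L, killingForm ℂ L x y = killingForm ℂ L y x :=
    fun x y => LieModule.traceForm_comm ℂ L L x y
  constructor
  · intro J X Y Z
    simp only [hT, lie_add, lie_smul, hk]
    rw [hsymm X ⁅J, Y⁆, hsymm X ⁅J, Z⁆, hsymm Y ⁅J, Z⁆, hk, hk, hk]
    module
  · intro W X Y Z
    simp only [hT, lie_add, lie_smul]
    rw [hsymm Y W, hsymm Z W, hsymm Z X,
      ← lie_skew X W, ← lie_skew Y W, ← lie_skew Z W, ← lie_skew Y X, ← lie_skew Z X,
      ← lie_skew Z Y]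
    module
end

section
/- Let g₀ be the D-dimensional Poincaré algebra with generators L_{μν} = -L_{νμ}, P_μ and let g₁ = ⟨V_μ⟩ be the D-dimensional vector representation, with brackets [L_{μν},L_{ρσ}] = η_{νσ}L_{ρμ} - η_{μσ}L_{ρν} + η_{νρ}L_{μσ} - η_{μρ}L_{νσ}, [L_{μν},P_ρ] = η_{νρ}P_μ - η_{μρ}P_ν, [L_{μν},V_ρ] = η_{νρ}V_μ - η_{μρ}V_ν, [P_μ,V_ν] = 0, and {V_μ,V_ν,V_ρ} = η_{μν}P_ρ + η_{μρ}P_ν + η_{ρν}P_μ, where η = diag(1,-1,…,-1). Then g = g₀ ⊕ g₁ is an elementary Lie algebra of order 3: all four Jacobi identities hold, in particular [L_{μν},{V_ρ,V_σ,V_τ}] = {[L_{μν},V_ρ],V_σ,V_τ} + {V_ρ,[L_{μν},V_σ],V_τ} + {V_ρ,V_σ,[L_{μν},V_τ]} and Σ_{cyclic over 4 terms} [V_{μ_i},{V_{μ_1},…,V̂_{μ_i},…,V_{μ_4}}] = 0. -/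
/-- The Poincaré algebra `g₀ = ⟨L_{μν}, P_μ⟩` together with the
vector representation `g₁ = ⟨V_μ⟩` and the symmetric trilinear bracket
`{V_μ,V_ν,V_ρ} = η_{μν}P_ρ + η_{μρ}P_ν + η_{ρν}P_μ` is an elementary Lie
algebra of order 3: in particular the derivation identity for `L_{μν}` and the
four-term identity `Σᵢ [V_{μᵢ}, {V_{μ₁},…,V̂_{μᵢ},…,V_{μ₄}}] = 0` hold. -/
theorem poincare_lie_order_three (D : ℕ)
    {M0 : Type*} [LieRing M0] [LieAlgebra ℂ M0]
    {M1 : Type*} [AddCommGroup M1] [Module ℂ M1]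
    [LieRingModule M0 M1] [LieModule ℂ M0 M1]
    (η : Fin D → Fin D → ℂ)
    (hη : ∀ μ ν, η μ ν = if μ = ν then (if (μ : ℕ) = 0 then 1 else -1) else 0)
    (L : Fin D → Fin D → M0) (P : Fin D → M0) (V : Fin D → M1)
    (hanti : ∀ μ ν, L μ ν = -L ν μ)
    (hLL : ∀ μ ν ρ τ, ⁅L μ ν, L ρ τ⁆ =
      η ν τ • L ρ μ - η μ τ • L ρ ν + η ν ρ • L μ τ - η μ ρ • L ν τ)
    (hLP : ∀ μ ν ρ, ⁅L μ ν, P ρ⁆ = η ν ρ • P μ - η μ ρ • P ν)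
    (hLV : ∀ μ ν ρ, ⁅L μ ν, V ρ⁆ = η ν ρ • V μ - η μ ρ • V ν)
    (hPV : ∀ μ ν, ⁅P μ, V ν⁆ = 0)
    (tri : M1 →ₗ[ℂ] M1 →ₗ[ℂ] M1 →ₗ[ℂ] M0)
    (htriSymm : ∀ x y z : M1, tri x y z = tri y x z ∧ tri x y z = tri x z y)
    (htri : ∀ μ ν ρ, tri (V μ) (V ν) (V ρ) =
      η μ ν • P ρ + η μ ρ • P ν + η ρ ν • P μ) :
    (∀ μ ν ρ τ κ, ⁅L μ ν, tri (V ρ) (V τ) (V κ)⁆ =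
      tri ⁅L μ ν, V ρ⁆ (V τ) (V κ) + tri (V ρ) ⁅L μ ν, V τ⁆ (V κ) +
        tri (V ρ) (V τ) ⁅L μ ν, V κ⁆) ∧
    (∀ μ ν ρ τ,
      ⁅tri (V ν) (V ρ) (V τ), V μ⁆ + ⁅tri (V ρ) (V τ) (V μ), V ν⁆ +
        ⁅tri (V τ) (V μ) (V ν), V ρ⁆ + ⁅tri (V μ) (V ν) (V ρ), V τ⁆ = 0) := by
  have hsym : ∀ a b, η a b = η b a := by
    intro a b
    rcases eq_or_ne a b with h | h
    · subst h; rfl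
    · rw [hη, hη, if_neg h, if_neg (Ne.symm h)]
  constructor
  · intro μ ν ρ τ κ
    rw [hLV μ ν ρ, hLV μ ν τ, hLV μ ν κ, htri]
    simp only [map_sub, map_smul, LinearMap.sub_apply, LinearMap.smul_apply,
      lie_add, lie_smul, hLP, htri]
    simp only [hsym ρ μ, hsym τ μ, hsym κ μ, hsym ρ ν, hsym τ ν, hsym κ ν, hsym τ ρ, hsym κ ρ, hsym κ τ]
    module
  · intro μ ν ρ τ
    simp only [htri, add_lie, smul_lie, hPV, smul_zero, add_zero, zero_add]
end

section
/- Let g = g₀ ⊕ g₁ = (⊕_{a∈Γ} g_{0,a}) ⊕ (⊕_{a∈Γ} g_{1,a}) be a color Lie algebra of order three with grading group Γ and commutation factor N satisfying N(a,a) = 1 for all a, and let Λ = ⊕_{a∈Γ} Λ_a be an associative Γ-graded algebra with θψ = N(a,b)⁻¹ψθ for θ ∈ Λ_a, ψ ∈ Λ_b. Define on g(Λ)₀ = (⊕_a Λ_{-a} ⊗ g_{0,a}) ⊕ (⊕_a Λ_{-a} ⊗ g_{1,a}) the trilinear bracket {θ⊗X, ψ⊗Y, η⊗Z} := θψη ⊗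 ⦃X,Y,Z⦄ for θ ∈ Λ_{-a}, X ∈ g_{1,a}, ψ ∈ Λ_{-b}, Y ∈ g_{1,b}, η ∈ Λ_{-c}, Z ∈ g_{1,c}. Then this trilinear bracket is fully symmetric in its three arguments, and the identity [θ₁⊗Y₁, {θ₂⊗Y₂, θ₃⊗Y₃, θ₄⊗Y₄}] = θ₁θ₂θ₃θ₄ ⊗ ⟦Y₁, ⦃Y₂,Y₃,Y₄⦄⟧ holds; consequently Σ_{i=1}^4 [θ_i⊗Y_i, {…,θ̂_i⊗Y_i,…}] = 0, so g(Λ)₀ is a Lie algebra of order three. -/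
open TensorProduct

/-- decoloration of color Lie algebras of order three: for a
color Lie algebra of order three `g = g₀ ⊕ g₁` with commutation factor `N`
(`N(a,a) = 1`) and an associative `Γ`-graded algebra `Λ` with
`θψ = N(a,b)⁻¹ψθ`, the trilinear bracket
`{θ⊗X, ψ⊗Y, η⊗Z} = θψη ⊗ ⦃X,Y,Z⦄` on `g(Λ)₀` is fully symmetric,
`[θ₁⊗Y₁, {θ₂⊗Y₂, θ₃⊗Y₃, θ₄⊗Y₄}] = θ₁θ₂θ₃θ₄ ⊗ ⟦Y₁, ⦃Y₂,Y₃,Y₄⦄⟧` holds, and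
consequently the four-term Jacobi identity of a Lie algebra of order three
holds. -/
theorem decoloration_lie_order_three {Γ : Type*} [AddCommGroup Γ]
    (N : Γ → Γ → ℂ)
    (hN0 : ∀ a b, N a b ≠ 0)
    (h1 : ∀ a b, N a b * N b a = 1)
    (h2 : ∀ a b c, N a (b + c) = N a b * N a c)
    (h3 : ∀ a b c, N (a + b) c = N a c * N b c)
    (hNaa : ∀ a, N a a = 1)
    {Λ : Type*} [Ring Λ] [Algebra ℂ Λ] (Λg : Γ → Submodule ℂ Λ)
    (hΛmul : ∀ a b (x y : Λ), x ∈ Λg a → y ∈ Λg b → x * y ∈ Λg (a + b))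
    (hΛcomm : ∀ a b (x y : Λ), x ∈ Λg a → y ∈ Λg b →
      x * y = (N a b)⁻¹ • (y * x))
    {M0 : Type*} [AddCommGroup M0] [Module ℂ M0]
    {M1 : Type*} [AddCommGroup M1] [Module ℂ M1]
    (g0g : Γ → Submodule ℂ M0) (g1g : Γ → Submodule ℂ M1)
    -- the trilinear bracket ⦃·,·,·⦄ : g₁ × g₁ × g₁ → g₀
    (tri : M1 →ₗ[ℂ] M1 →ₗ[ℂ] M1 →ₗ[ℂ] M0)
    (htrig : ∀ a b c (Y₁ Y₂ Y₃ : M1), Y₁ ∈ g1g a → Y₂ ∈ g1g b → Y₃ ∈ g1g c →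
      tri Y₁ Y₂ Y₃ ∈ g0g (a + b + c))
    (htsym1 : ∀ a b c (Y₁ Y₂ Y₃ : M1),
      Y₁ ∈ g1g a → Y₂ ∈ g1g b → Y₃ ∈ g1g c →
        tri Y₁ Y₂ Y₃ = N a b • tri Y₂ Y₁ Y₃)
    (htsym2 : ∀ a b c (Y₁ Y₂ Y₃ : M1),
      Y₁ ∈ g1g a → Y₂ ∈ g1g b → Y₃ ∈ g1g c →
        tri Y₁ Y₂ Y₃ = N b c • tri Y₁ Y₃ Y₂)
    -- the color bracket ⟦·,·⟧ : g₁ × g₀ → g₁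
    (brM : M1 →ₗ[ℂ] M0 →ₗ[ℂ] M1)
    (hbrMg : ∀ a b (Y : M1) (X : M0), Y ∈ g1g a → X ∈ g0g b →
      brM Y X ∈ g1g (a + b))
    -- the color four-term Jacobi identity of the color Lie algebra of order 3
    (h4 : ∀ a b c d (Y₁ Y₂ Y₃ Y₄ : M1),
      Y₁ ∈ g1g a → Y₂ ∈ g1g b → Y₃ ∈ g1g c → Y₄ ∈ g1g d →
        brM Y₁ (tri Y₂ Y₃ Y₄) +
          N a (b + c + d) • brM Y₂ (tri Y₃ Y₄ Y₁) +
          (N a (b + c + d) * N b (a + c + d)) • brM Y₃ (tri Y₄ Y₁ Y₂) +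
          (N a (b + c + d) * N b (a + c + d) * N c (a + b + d)) •
            brM Y₄ (tri Y₁ Y₂ Y₃) = 0) :
    -- full symmetry of the decolored trilinear bracket
    (∀ (a b c : Γ) (θ ψ η : Λ) (Y₁ Y₂ Y₃ : M1),
      θ ∈ Λg (-a) → ψ ∈ Λg (-b) → η ∈ Λg (-c) →
      Y₁ ∈ g1g a → Y₂ ∈ g1g b → Y₃ ∈ g1g c →
        (θ * ψ * η) ⊗ₜ[ℂ] (tri Y₁ Y₂ Y₃) = (ψ * θ * η) ⊗ₜ[ℂ] (tri Y₂ Y₁ Y₃) ∧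
        (θ * ψ * η) ⊗ₜ[ℂ] (tri Y₁ Y₂ Y₃) = (θ * η * ψ) ⊗ₜ[ℂ] (tri Y₁ Y₃ Y₂)) ∧
    -- [θ₁⊗Y₁, {θ₂⊗Y₂, θ₃⊗Y₃, θ₄⊗Y₄}] = θ₁θ₂θ₃θ₄ ⊗ ⟦Y₁, ⦃Y₂,Y₃,Y₄⦄⟧
    (∀ (θ₁ θ₂ θ₃ θ₄ : Λ) (Y₁ Y₂ Y₃ Y₄ : M1),
      (θ₁ * (θ₂ * θ₃ * θ₄)) ⊗ₜ[ℂ] (brM Y₁ (tri Y₂ Y₃ Y₄)) =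
        (θ₁ * θ₂ * θ₃ * θ₄) ⊗ₜ[ℂ] (brM Y₁ (tri Y₂ Y₃ Y₄))) ∧
    -- the resulting ordinary four-term Jacobi identity on g(Λ)₀
    (∀ (a b c d : Γ) (θ₁ θ₂ θ₃ θ₄ : Λ) (Y₁ Y₂ Y₃ Y₄ : M1),
      θ₁ ∈ Λg (-a) → θ₂ ∈ Λg (-b) → θ₃ ∈ Λg (-c) → θ₄ ∈ Λg (-d) →
      Y₁ ∈ g1g a → Y₂ ∈ g1g b → Y₃ ∈ g1g c → Y₄ ∈ g1g d →
        (θ₁ * (θ₂ * θ₃ * θ₄)) ⊗ₜ[ℂ] (brM Y₁ (tri Y₂ Y₃ Y₄)) +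
          (θ₂ * (θ₃ * θ₄ * θ₁)) ⊗ₜ[ℂ] (brM Y₂ (tri Y₃ Y₄ Y₁)) +
          (θ₃ * (θ₄ * θ₁ * θ₂)) ⊗ₜ[ℂ] (brM Y₃ (tri Y₄ Y₁ Y₂)) +
          (θ₄ * (θ₁ * θ₂ * θ₃)) ⊗ₜ[ℂ] (brM Y₄ (tri Y₁ Y₂ Y₃)) =
            (0 : Λ ⊗[ℂ] M1)) := by
  -- basic facts about the commutation factor
  have hz1 : ∀ a : Γ, N a 0 = 1 := by
    intro a
    have h := h2 a 0 0
    simp only [add_zero] at h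
    nth_rewrite 1 [← mul_one (N a 0)] at h
    exact (mul_left_cancel₀ (hN0 a 0) h).symm
  have hz2 : ∀ a : Γ, N 0 a = 1 := by
    intro a
    have h := h3 0 0 a
    simp only [add_zero] at h
    nth_rewrite 1 [← mul_one (N 0 a)] at h
    exact (mul_left_cancel₀ (hN0 0 a) h).symm
  have hnegL : ∀ a b : Γ, N (-a) b = (N a b)⁻¹ := by
    intro a b
    have h := h3 (-a) a b
    simp only [neg_add_cancel, hz2] at h
    exact eq_inv_of_mul_eq_one_left h.symm
  have hneg : ∀ a b : Γ, N (-a) (-b) = N a b := by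
    intro a b
    have h := h2 (-a) (-b) b
    simp only [neg_add_cancel, hz1] at h
    have h' : N (-a) (-b) = (N (-a) b)⁻¹ :=
      eq_inv_of_mul_eq_one_left h.symm
    rw [h', hnegL, inv_inv]
  -- swap lemma in Λ
  have hswap : ∀ (a b : Γ) (x y : Λ), x ∈ Λg a → y ∈ Λg b →
      y * x = N a b • (x * y) := by
    intro a b x y hx hy
    rw [hΛcomm a b x y hx hy, smul_smul, mul_inv_cancel₀ (hN0 a b), one_smul]
  have hswapn : ∀ (a b : Γ) (x y : Λ), x ∈ Λg (-a) → y ∈ Λg (-b) →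
      y * x = N a b • (x * y) := by
    intro a b x y hx hy
    rw [hswap (-a) (-b) x y hx hy, hneg]
  refine ⟨?_, ?_, ?_⟩
  · -- full symmetry
    intro a b c θ ψ η Y₁ Y₂ Y₃ hθ hψ hη hY1 hY2 hY3
    constructor
    · rw [htsym1 a b c Y₁ Y₂ Y₃ hY1 hY2 hY3, tmul_smul, smul_tmul']
      congr 1
      have hs : ψ * θ = N a b • (θ * ψ) := hswapn a b θ ψ hθ hψ
      rw [hs, smul_mul_assoc]
    · rw [htsym2 a b c Y₁ Y₂ Y₃ hY1 hY2 hY3, tmul_smul, smul_tmul']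
      congr 1
      have hs : η * ψ = N b c • (ψ * η) := hswapn b c ψ η hψ hη
      rw [mul_assoc θ η ψ, hs, mul_smul_comm, ← mul_assoc]
  · -- associativity identity
    intro θ₁ θ₂ θ₃ θ₄ Y₁ Y₂ Y₃ Y₄
    rw [mul_assoc θ₁ θ₂ θ₃, mul_assoc θ₁ (θ₂ * θ₃) θ₄, mul_assoc θ₂ θ₃ θ₄]
  · -- four-term Jacobi identity
    intro a b c d θ₁ θ₂ θ₃ θ₄ Y₁ Y₂ Y₃ Y₄ hθ1 hθ2 hθ3 hθ4 hY1 hY2 hY3 hY4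
    have h234 : θ₂ * θ₃ * θ₄ ∈ Λg (-(b + c + d)) := by
      rw [show -(b + c + d) = -b + -c + -d by abel]
      exact hΛmul _ _ _ _ (hΛmul _ _ _ _ hθ2 hθ3) hθ4
    have h34 : θ₃ * θ₄ ∈ Λg (-(c + d)) := by
      rw [show -(c + d) = -c + -d by abel]
      exact hΛmul _ _ _ _ hθ3 hθ4
    have h12 : θ₁ * θ₂ ∈ Λg (-(a + b)) := by
      rw [show -(a + b) = -a + -b by abel]
      exact hΛmul _ _ _ _ hθ1 hθ2
    have h123 : θ₁ * θ₂ * θ₃ ∈ Λg (-(a + b + c)) := by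
      rw [show -(a + b + c) = -(a + b) + -c by abel]
      exact hΛmul _ _ _ _ h12 hθ3
    set T : Λ := θ₁ * θ₂ * θ₃ * θ₄ with hT
    have e1 : θ₁ * (θ₂ * θ₃ * θ₄) = T := by
      rw [hT, mul_assoc θ₁ θ₂ θ₃, mul_assoc θ₁ (θ₂ * θ₃) θ₄, mul_assoc θ₂ θ₃ θ₄]
    have e2 : θ₂ * (θ₃ * θ₄ * θ₁) = N a (b + c + d) • T := by
      have h' : (θ₂ * θ₃ * θ₄) * θ₁ = N a (b + c + d) • (θ₁ * (θ₂ * θ₃ * θ₄)) :=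
        hswapn a (b + c + d) θ₁ (θ₂ * θ₃ * θ₄) hθ1 h234
      calc θ₂ * (θ₃ * θ₄ * θ₁) = (θ₂ * θ₃ * θ₄) * θ₁ := by
            rw [mul_assoc θ₂ θ₃ θ₄, ← mul_assoc, ← mul_assoc, mul_assoc θ₂ θ₃ θ₄]
        _ = N a (b + c + d) • (θ₁ * (θ₂ * θ₃ * θ₄)) := h'
        _ = N a (b + c + d) • T := by rw [e1]
    have e3 : θ₃ * (θ₄ * θ₁ * θ₂) =
        (N a (b + c + d) * N b (a + c + d)) • T := by
      have h' : (θ₃ * θ₄) * (θ₁ * θ₂) = N (a + b) (c + d) • ((θ₁ * θ₂) * (θ₃ * θ₄)) :=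
        hswapn (a + b) (c + d) (θ₁ * θ₂) (θ₃ * θ₄) h12 h34
      have hcoef : N (a + b) (c + d) = N a (b + c + d) * N b (a + c + d) := by
        rw [h3, h2, h2]
        have hh2a : N a (b + c + d) = N a b * N a c * N a d := by
          rw [h2, h2]
        have hh2b : N b (a + c + d) = N b a * N b c * N b d := by
          rw [h2, h2]
        rw [hh2a, hh2b]
        linear_combination (-(N a c * N a d * N b c * N b d)) * h1 a b
      calc θ₃ * (θ₄ * θ₁ * θ₂) = (θ₃ * θ₄) * (θ₁ * θ₂) := by
            rw [mul_assoc θ₄ θ₁ θ₂, ← mul_assoc]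
        _ = N (a + b) (c + d) • ((θ₁ * θ₂) * (θ₃ * θ₄)) := h'
        _ = (N a (b + c + d) * N b (a + c + d)) • T := by
            rw [hcoef, hT, ← mul_assoc]
    have e4 : θ₄ * (θ₁ * θ₂ * θ₃) =
        (N a (b + c + d) * N b (a + c + d) * N c (a + b + d)) • T := by
      have h' : θ₄ * (θ₁ * θ₂ * θ₃) = N (a + b + c) d • ((θ₁ * θ₂ * θ₃) * θ₄) :=
        hswapn (a + b + c) d (θ₁ * θ₂ * θ₃) θ₄ h123 hθ4
      have hcoef : N (a + b + c) d =
          N a (b + c + d) * N b (a + c + d) * N c (a + b + d) := by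
        rw [h3, h3]
        have ha : N a (b + c + d) = N a b * N a c * N a d := by rw [h2, h2]
        have hb : N b (a + c + d) = N b a * N b c * N b d := by rw [h2, h2]
        have hc : N c (a + b + d) = N c a * N c b * N c d := by rw [h2, h2]
        rw [ha, hb, hc]
        linear_combination (-(N a d * N b d * N c d * N a c * N c a * N b c * N c b)) * h1 a b +
          (-(N a d * N b d * N c d * N b c * N c b)) * h1 a c +
          (-(N a d * N b d * N c d)) * h1 b c
      rw [h', hcoef, hT]
    rw [e1, e2, e3, e4, smul_tmul, smul_tmul, smul_tmul, ← tmul_add, ← tmul_add,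
      ← tmul_add, h4 a b c d Y₁ Y₂ Y₃ Y₄ hY1 hY2 hY3 hY4, tmul_zero]
end
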